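/- Let C be an additive code in Z₂^α × R^β such that every nonzero codeword has even Lee weight. Then (1,...,1 | u,...,u) ∈ C^⊥, where C^⊥ = {w : v·w = 0 for all v ∈ C}. -/

import Mathlib

open DualNumber

/-- The binary field `ℤ₂`. -/
abbrev R2 : Type := ZMod 2

/-- The ring `R = ℤ₂[u]/(u²) = ℤ₂ + u ℤ₂`, realized as dual numbers over `ℤ₂`;
`u` is `eps`. -/
abbrev Ru : Type := DualNumber (ZMod 2)

instance : Fintype Ru := inferInstanceAs (Fintype (ZMod 2 × ZMod 2))
instance : DecidableEq Ru := inferInstanceAs (DecidableEq (ZMod 2 × ZMod 2))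

/-- The Gray map `ψ : R → ℤ₂²`, `ψ(a + u b) = (b, a + b)`. -/
def psi (x : Ru) : R2 × R2 := (x.snd, x.fst + x.snd)

/-- The Lee weight on `R`: `w_L(0)=0, w_L(1)=1, w_L(u)=2, w_L(1+u)=1`. -/
def wL (x : Ru) : ℕ := if x.fst = 0 then (if x.snd = 0 then 0 else 2) else 1

/-- The ambient space `ℤ₂^α × R^β`. -/
abbrev V (α β : ℕ) : Type := (Fin α → R2) × (Fin β → Ru)

/-- Lee weight of a vector of `ℤ₂^α × R^β`: Hamming weight on the binary part plus
coordinatewise Lee weight on the `R` part. -/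
def wLvec {α β : ℕ} (c : V α β) : ℕ :=
  (∑ i, if c.1 i ≠ 0 then 1 else 0) + ∑ j, wL (c.2 j)

/-- Hamming weight of a binary vector. -/
def wHvec {ι : Type} [Fintype ι] (f : ι → R2) : ℕ :=
  ∑ i, if f i ≠ 0 then 1 else 0

/-- The extended Gray map `Φ : ℤ₂^α × R^β → ℤ₂^(α+2β)`: identity on the binary
coordinates, `ψ` coordinatewise on the `R` coordinates. -/
def Phi {α β : ℕ} (c : V α β) : (Fin α ⊕ Fin β × Fin 2) → R2 :=
  fun i => match i with
  | Sum.inl i => c.1 i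
  | Sum.inr (j, k) => if k = 0 then (psi (c.2 j)).1 else (psi (c.2 j)).2

/-- Scalar multiplication of `R` on `ℤ₂^α × R^β`:
`(r + q u) · (a | b) = (r a | (r + q u) b)`. -/
def rsmul {α β : ℕ} (c : Ru) (v : V α β) : V α β :=
  (fun i => c.fst * v.1 i, fun j => c * v.2 j)

/-- The inner product `v ⋅ w = u ∑ vᵢ wᵢ + ∑ vⱼ wⱼ ∈ R` on `ℤ₂^α × R^β`. -/
def ip {α β : ℕ} (v w : V α β) : Ru :=
  eps * (∑ i, TrivSqZeroExt.inl (v.1 i * w.1 i)) + ∑ j, v.2 j * w.2 j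

/-- The dual of a code with respect to the inner product `ip`. -/
def dualSet {α β : ℕ} (C : Set (V α β)) : Set (V α β) :=
  {w | ∀ v ∈ C, ip v w = 0}

/-- The all-ones / all-`u` vector `(1,…,1 | u,…,u)`. -/
def allone (α β : ℕ) : V α β := (fun _ => 1, fun _ => (eps : Ru))


/-! Multiplying by `u` only sees the residue mod `u`: `x * u = u * x.fst`, so
`v ⋅ (1 | u) = u (∑ vᵢ + ∑ (vⱼ).fst)`. On the other hand `w_L(x) ≡ x.fst (mod 2)`, so the sum
in parentheses is the Lee weight of `v` reduced mod 2, which vanishes for codewords. -/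

open TrivSqZeroExt

theorem DualNumber.mul_eps {R : Type*} [CommSemiring R] (x : DualNumber R) :
    x * ε = inr x.fst := by
  ext <;> simp

theorem DualNumber.eps_mul_inl {R : Type*} [Semiring R] (r : R) :
    ε * (inl r : DualNumber R) = inr r := by
  ext <;> simp

theorem natCast_wL (x : Ru) : (wL x : ZMod 2) = x.fst := by
  obtain ⟨a, b⟩ := x
  revert a b
  decide

theorem natCast_wLvec {α β : ℕ} (v : V α β) :
    (wLvec v : ZMod 2) = ∑ i, v.1 i + ∑ j, (v.2 j).fst := by
  have hamming : ∀ a : R2, (if a ≠ 0 then (1 : R2) else 0) = a := by decide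
  simp only [wLvec, Nat.cast_add, Nat.cast_sum, Nat.cast_ite, Nat.cast_one, Nat.cast_zero, hamming,
    natCast_wL]

theorem ip_allone {α β : ℕ} (v : V α β) :
    ip v (allone α β) = inr (∑ i, v.1 i + ∑ j, (v.2 j).fst) := by
  simp only [ip, allone, mul_one, DualNumber.mul_eps, ← inl_sum, ← inr_sum, DualNumber.eps_mul_inl,
    inr_add]

theorem allone_mem_dual_general (α β : ℕ) (C : AddSubgroup (V α β))
    (heven : ∀ v ∈ C, v ≠ 0 → Even (wLvec v)) :
    allone α β ∈ dualSet (C : Set (V α β)) := by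
  intro v hv
  obtain rfl | hv0 := eq_or_ne v 0
  · simp [ip]
  rw [ip_allone, ← natCast_wLvec, (heven v hv hv0).natCast_zmod_two, inr_zero]

/-- if every nonzero codeword of an additive code `C ⊆ ℤ₂^α × R^β` has
even Lee weight, then `(1,…,1 | u,…,u) ∈ C^⊥`. -/
theorem allone_mem_dual (α β : ℕ) (C : AddSubgroup (V α β))
    (hsmul : ∀ (c : Ru) (v : V α β), v ∈ C → rsmul c v ∈ C)
    (heven : ∀ v ∈ C, v ≠ 0 → Even (wLvec v)) :
    allone α β ∈ dualSet (C : Set (V α β)) :=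
  allone_mem_dual_general α β C heven
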